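/- Let a = (a_k) be a finite complex sequence and f(e^{iθ}) = Σ_k a_k e^{i 2^k θ} a lacunary trigonometric polynomial on T. Then for every 1 ≤ p < ∞, ‖G^H(f)‖_{L_p(T)} ≈ ‖a‖_{ℓ_2}, with absolute implied constants (independent of p and of the sequence a), where G^H is the g-function of the periodic heat semigroup. -/

import Mathlib

open MeasureTheory ENNReal

noncomputable section

/-- The lacunary trigonometric polynomial `f(e^{iθ}) = ∑_k a_k e^{i 2^k θ}` on the circle,
with finitely supported coefficients `a`. -/
def lacunaryPoly (a : ℕ →₀ ℂ) (z : AddCircle (1 : ℝ)) : ℂ :=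
  ∑ k ∈ a.support, a k * fourier ((2 : ℤ) ^ k) z

/-- The `g`-function of the periodic heat semigroup
`H_r(f)(θ) = ∑_n f̂(n) r^{n²} e^{inθ}` applied to the lacunary polynomial with
coefficients `a`: `G^H(f) = (∫_0^1 (1-r) |d/dr H_r(f)|² dr)^{1/2}`.
(For `f = ∑_k a_k e^{i2^kθ}` one has `H_r(f) = ∑_k a_k r^{4^k} e^{i2^kθ}`.) -/
def lacunaryHeatG (a : ℕ →₀ ℂ) (z : AddCircle (1 : ℝ)) : ℝ :=
  (∫ r in Set.Ioo (0 : ℝ) 1, (1 - r) *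
      ‖deriv (fun ρ : ℝ =>
          ∑ k ∈ a.support, a k * ((ρ ^ (4 ^ k) : ℝ) : ℂ) * fourier ((2 : ℤ) ^ k) z) r‖ ^ 2)
    ^ (1 / 2 : ℝ)

/-!
Since `H_r f = ∑ₖ aₖ r^{4ᵏ} e^{i2ᵏθ}`, expanding `|∂_r H_r f|²` and integrating in `r` turns
`G^H(f)(θ)²` into the quadratic form `∑_{j,k} γ(4ʲ, 4ᵏ) ⟪aⱼ e^{i2ʲθ}, aₖ e^{i2ᵏθ}⟫` with
`γ(m, n) = powGram m n = ∫₀¹ (1 - r) m r^{m-1} n r^{n-1} dr = mn / ((m + n - 1)(m + n))`.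
Lacunarity gives `γ(4ʲ, 4ᵏ) ≤ 4^{-|j-k|}`, so Schur's test yields `G^H(f) ≤ 2 ‖a‖_{ℓ₂}`
pointwise, bounding every `L_p` norm. Conversely, orthogonality of the characters gives
`‖G^H(f)‖₂² = ∑ₖ γ(4ᵏ, 4ᵏ) |aₖ|² ≥ ‖a‖²_{ℓ₂} / 4`, and `‖G‖₁ ≥ ‖G‖₂² / ‖G‖_∞ ≥ ‖a‖_{ℓ₂} / 8`
bounds every `L_p` norm with `p ≥ 1` from below.
-/

open scoped RealInnerProductSpace

theorem sum_sum_mul_mul_le_of_sum_le {ι : Type*} (s : Finset ι) {K : ι → ι → ℝ} {C : ℝ}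
    (x : ι → ℝ) (hK : ∀ j k, 0 ≤ K j k) (hK_symm : ∀ j k, K j k = K k j)
    (hrow : ∀ j ∈ s, ∑ k ∈ s, K j k ≤ C) :
    ∑ j ∈ s, ∑ k ∈ s, K j k * (x j * x k) ≤ C * ∑ j ∈ s, x j ^ 2 := by
  have h_swap : ∑ j ∈ s, ∑ k ∈ s, K j k * x k ^ 2 = ∑ j ∈ s, ∑ k ∈ s, K j k * x j ^ 2 := by
    rw [Finset.sum_comm]
    simp only [hK_symm]
  calc ∑ j ∈ s, ∑ k ∈ s, K j k * (x j * x k)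
      ≤ ∑ j ∈ s, ∑ k ∈ s, (K j k * x j ^ 2 + K j k * x k ^ 2) / 2 :=
        Finset.sum_le_sum fun j _ ↦ Finset.sum_le_sum fun k _ ↦ by
          nlinarith [hK j k, mul_nonneg (hK j k) (sq_nonneg (x j - x k))]
    _ = ∑ j ∈ s, x j ^ 2 * ∑ k ∈ s, K j k := by
      simp only [← Finset.sum_div, Finset.sum_add_distrib, h_swap, Finset.mul_sum]
      rw [add_self_div_two]
      simp only [mul_comm]
    _ ≤ ∑ j ∈ s, x j ^ 2 * C :=
      Finset.sum_le_sum fun j hj ↦ mul_le_mul_of_nonneg_left (hrow j hj) (sq_nonneg _)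
    _ = C * ∑ j ∈ s, x j ^ 2 := by rw [Finset.mul_sum]; simp only [mul_comm]

theorem hasSum_pow_natAbs {q : ℝ} (hq₀ : 0 ≤ q) (hq₁ : q < 1) :
    HasSum (fun n : ℤ ↦ q ^ n.natAbs) ((1 + q) / (1 - q)) := by
  have h_neg : HasSum (fun n : ℕ ↦ q ^ (-((n : ℤ) + 1)).natAbs) (q * (1 - q)⁻¹) := by
    have h_exp (n : ℕ) : q ^ (-((n : ℤ) + 1)).natAbs = q * q ^ n := by
      rw [show (-((n : ℤ) + 1)).natAbs = n + 1 by omega, pow_succ']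
    simp only [h_exp]
    exact (hasSum_geometric_of_lt_one hq₀ hq₁).mul_left q
  have h_pos : HasSum (fun n : ℕ ↦ q ^ (n : ℤ).natAbs) (1 - q)⁻¹ := by
    simpa only [Int.natAbs_natCast] using hasSum_geometric_of_lt_one hq₀ hq₁
  convert HasSum.of_nat_of_neg_add_one (f := fun n : ℤ ↦ q ^ n.natAbs) h_pos h_neg using 1
  ring

theorem sum_pow_natAbs_sub_le (s : Finset ℕ) (j : ℕ) {q : ℝ} (hq₀ : 0 ≤ q) (hq₁ : q < 1) :
    ∑ k ∈ s, q ^ ((k : ℤ) - j).natAbs ≤ (1 + q) / (1 - q) := by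
  let e : ℕ ↪ ℤ := ⟨fun k ↦ (k : ℤ) - j, fun k l h ↦ by simpa using h⟩
  calc ∑ k ∈ s, q ^ ((k : ℤ) - j).natAbs = ∑ n ∈ s.map e, q ^ n.natAbs := by
        rw [Finset.sum_map]; rfl
    _ ≤ _ := sum_le_hasSum _ (fun _ _ ↦ by positivity) (hasSum_pow_natAbs hq₀ hq₁)

def powGram (m n : ℕ) : ℝ := m * n / ((m + n - 1) * (m + n))

theorem powGram_comm (m n : ℕ) : powGram m n = powGram n m := by
  rw [powGram, powGram, add_comm (n : ℝ), mul_comm (n : ℝ)]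

theorem powGram_nonneg {m n : ℕ} (hm : 1 ≤ m) : 0 ≤ powGram m n := by
  have hm' : (1 : ℝ) ≤ m := by exact_mod_cast hm
  unfold powGram
  apply div_nonneg (by positivity)
  apply mul_nonneg <;> linarith [(n.cast_nonneg : (0 : ℝ) ≤ n)]

theorem powGram_le_div {m n : ℕ} (hm : 1 ≤ m) (hmn : m ≤ n) : powGram m n ≤ m / n := by
  have hm' : (1 : ℝ) ≤ m := by exact_mod_cast hm
  have hmn' : (m : ℝ) ≤ n := by exact_mod_cast hmn
  rw [powGram, div_le_div_iff₀ (by nlinarith) (by linarith)]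
  have h_sq : (n : ℝ) * n ≤ (m + n - 1) * (m + n) :=
    mul_le_mul (by linarith) (by linarith) (by linarith) (by linarith)
  nlinarith [mul_le_mul_of_nonneg_left h_sq (by linarith : (0 : ℝ) ≤ m)]

theorem one_fourth_le_powGram_self {n : ℕ} (hn : 1 ≤ n) : 1 / 4 ≤ powGram n n := by
  have hn' : (1 : ℝ) ≤ n := by exact_mod_cast hn
  rw [powGram, le_div_iff₀ (by nlinarith)]
  nlinarith

theorem setIntegral_Ioo_one_sub_mul_pow (m : ℕ) :
    ∫ r in Set.Ioo (0 : ℝ) 1, (1 - r) * r ^ m = 1 / ((m + 1) * (m + 2)) := by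
  rw [← integral_Ioc_eq_integral_Ioo, ← intervalIntegral.integral_of_le zero_le_one]
  simp only [sub_mul, one_mul, ← pow_succ']
  rw [intervalIntegral.integral_sub (intervalIntegral.intervalIntegrable_pow m)
    (intervalIntegral.intervalIntegrable_pow (m + 1)), integral_pow, integral_pow]
  field_simp
  push_cast
  ring

theorem powGram_eq_setIntegral {m n : ℕ} (hm : 1 ≤ m) (hn : 1 ≤ n) :
    powGram m n =
      ∫ r in Set.Ioo (0 : ℝ) 1, (1 - r) * ((m * r ^ (m - 1)) * (n * r ^ (n - 1))) := by
  have h_pow (r : ℝ) : (1 - r) * ((m * r ^ (m - 1)) * (n * r ^ (n - 1))) =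
      (m * n) * ((1 - r) * r ^ (m - 1 + (n - 1))) := by
    rw [pow_add]; ring
  have h_cast : ((m - 1 + (n - 1) : ℕ) : ℝ) = m + n - 2 := by push_cast [hm, hn]; ring
  simp only [h_pow, integral_const_mul, setIntegral_Ioo_one_sub_mul_pow, h_cast, powGram]
  ring_nf

theorem hasDerivAt_sum_mul_ofReal_pow_mul {ι : Type*} (s : Finset ι) (n : ι → ℕ) (u w : ι → ℂ)
    (r : ℝ) :
    HasDerivAt (fun ρ : ℝ ↦ ∑ k ∈ s, u k * ((ρ ^ n k : ℝ) : ℂ) * w k)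
      (∑ k ∈ s, ((n k : ℝ) * r ^ (n k - 1)) • (u k * w k)) r := by
  refine HasDerivAt.fun_sum fun k _ ↦ ?_
  refine (((hasDerivAt_pow (n k) r).ofReal_comp.const_mul (u k)).mul_const (w k)).congr_deriv ?_
  rw [Complex.real_smul]
  push_cast
  ring

theorem norm_sum_smul_sq {ι E : Type*} [NormedAddCommGroup E] [InnerProductSpace ℝ E]
    (s : Finset ι) (c : ι → ℝ) (v : ι → E) :
    ‖∑ k ∈ s, c k • v k‖ ^ 2 = ∑ j ∈ s, ∑ k ∈ s, c j * c k * ⟪v j, v k⟫ := by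
  rw [← real_inner_self_eq_norm_sq, sum_inner]
  simp only [inner_sum, real_inner_smul_left, real_inner_smul_right]
  exact Finset.sum_congr rfl fun j _ ↦ Finset.sum_congr rfl fun k _ ↦ by ring

theorem setIntegral_one_sub_mul_norm_sum_smul_sq {ι E : Type*} [NormedAddCommGroup E]
    [InnerProductSpace ℝ E] (s : Finset ι) {n : ι → ℕ} (hn : ∀ k ∈ s, 1 ≤ n k) (v : ι → E) :
    ∫ r in Set.Ioo (0 : ℝ) 1, (1 - r) * ‖∑ k ∈ s, ((n k : ℝ) * r ^ (n k - 1)) • v k‖ ^ 2 =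
      ∑ j ∈ s, ∑ k ∈ s, powGram (n j) (n k) * ⟪v j, v k⟫ := by
  have h_term (j k : ι) : IntegrableOn (fun r : ℝ ↦
      (1 - r) * (n j * r ^ (n j - 1) * (n k * r ^ (n k - 1)) * ⟪v j, v k⟫)) (Set.Ioo 0 1) :=
    (Continuous.integrableOn_Icc (by fun_prop)).mono_set Set.Ioo_subset_Icc_self
  simp only [norm_sum_smul_sq, Finset.mul_sum]
  rw [integral_finsetSum _ fun j _ ↦ integrable_finsetSum _ fun k _ ↦ h_term j k]
  refine Finset.sum_congr rfl fun j hj ↦ ?_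
  rw [integral_finsetSum _ fun k _ ↦ h_term j k]
  refine Finset.sum_congr rfl fun k hk ↦ ?_
  simp only [powGram_eq_setIntegral (hn j hj) (hn k hk), ← integral_mul_const]
  congr 1 with r
  ring

theorem integral_fourier {T : ℝ} [hT : Fact (0 < T)] (n : ℤ) :
    ∫ z : AddCircle T, fourier n z = if n = 0 then (T : ℂ) else 0 := by
  split_ifs with hn
  · simp [hn, measureReal_def, AddCircle.measure_univ, hT.out.le]
  · exact integral_eq_zero_of_add_right_eq_neg (fourier_add_half_inv_index hn hT.out)

theorem integral_inner_mul_fourier {T : ℝ} [Fact (0 < T)] (c d : ℂ) (m n : ℤ) :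
    ∫ z : AddCircle T, ⟪c * fourier m z, d * fourier n z⟫ =
      if m = n then T * ⟪c, d⟫ else 0 := by
  have h_inner (z : AddCircle T) : ⟪c * fourier m z, d * fourier n z⟫ =
      RCLike.re (d * starRingEnd ℂ c * fourier (n - m) z) := by
    rw [Complex.inner, sub_eq_add_neg, fourier_add, fourier_neg, map_mul]
    simp only [RCLike.re_to_complex]
    ring_nf
  simp only [h_inner]
  rw [integral_re ((by fun_prop : Continuous fun z : AddCircle T ↦ d * starRingEnd ℂ c *
    fourier (n - m) z).integrable_of_hasCompactSupport (HasCompactSupport.of_compactSpace _)),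
    integral_const_mul, integral_fourier]
  simp only [sub_eq_zero, eq_comm (a := n)]
  split_ifs
  · simp [Complex.inner, mul_comm]
  · simp

theorem eLpNorm_le_ofReal_of_forall_norm_le {α F : Type*} [MeasurableSpace α] {μ : Measure α}
    [IsProbabilityMeasure μ] [NormedAddCommGroup F] {g : α → F} {M : ℝ} (p : ℝ≥0∞)
    (hg : ∀ x, ‖g x‖ ≤ M) : eLpNorm g p μ ≤ ENNReal.ofReal M := by
  simpa using eLpNorm_le_of_ae_bound (p := p) (μ := μ) (ae_of_all _ hg)

theorem ofReal_integral_sq_div_le_eLpNorm {α : Type*} [MeasurableSpace α] {μ : Measure α}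
    [IsProbabilityMeasure μ] {g : α → ℝ} {M : ℝ} {p : ℝ≥0∞} (hp : 1 ≤ p)
    (hg : AEStronglyMeasurable g μ) (hg₀ : ∀ x, 0 ≤ g x) (hgM : ∀ x, g x ≤ M) :
    ENNReal.ofReal ((∫ x, g x ^ 2 ∂μ) / M) ≤ eLpNorm g p μ := by
  rcases le_or_gt M 0 with hM | hM
  · rw [ENNReal.ofReal_of_nonpos (div_nonpos_of_nonneg_of_nonpos
      (integral_nonneg fun x ↦ sq_nonneg _) hM)]
    exact zero_le
  have hg_int : Integrable g μ := Integrable.of_bound hg M (ae_of_all _ fun x ↦ by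
    rw [Real.norm_of_nonneg (hg₀ x)]; exact hgM x)
  have h_sq : ∫ x, g x ^ 2 ∂μ ≤ M * ∫ x, g x ∂μ := by
    rw [← integral_const_mul]
    refine integral_mono_of_nonneg (ae_of_all _ fun x ↦ sq_nonneg _) (hg_int.const_mul M)
      (ae_of_all _ fun x ↦ ?_)
    show g x ^ 2 ≤ M * g x
    nlinarith [hgM x, hg₀ x]
  calc ENNReal.ofReal ((∫ x, g x ^ 2 ∂μ) / M) ≤ ENNReal.ofReal (∫ x, g x ∂μ) :=
        ENNReal.ofReal_le_ofReal ((div_le_iff₀' hM).2 h_sq)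
    _ = eLpNorm g 1 μ := by
      rw [ofReal_integral_eq_lintegral_ofReal hg_int (ae_of_all _ hg₀),
        eLpNorm_one_eq_lintegral_enorm]
      exact lintegral_congr fun x ↦ (Real.enorm_of_nonneg (hg₀ x)).symm
    _ ≤ eLpNorm g p μ := eLpNorm_le_eLpNorm_of_exponent_le hp hg

instance : IsProbabilityMeasure (volume : Measure (AddCircle (1 : ℝ))) :=
  ⟨by simp [AddCircle.measure_univ]⟩

theorem powGram_four_pow_le (j k : ℕ) :
    powGram (4 ^ j) (4 ^ k) ≤ 4⁻¹ ^ ((k : ℤ) - j).natAbs := by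
  wlog hjk : j ≤ k
  · rw [powGram_comm, show ((k : ℤ) - j).natAbs = ((j : ℤ) - k).natAbs by omega]
    exact this k j (by omega)
  obtain ⟨d, rfl⟩ := Nat.exists_eq_add_of_le hjk
  calc powGram (4 ^ j) (4 ^ (j + d)) ≤ ((4 ^ j : ℕ) : ℝ) / (4 ^ (j + d) : ℕ) :=
        powGram_le_div (Nat.one_le_pow _ _ (by norm_num))
          (Nat.pow_le_pow_right (by norm_num) hjk)
    _ = 4⁻¹ ^ ((↑(j + d) : ℤ) - j).natAbs := by
      rw [show ((↑(j + d) : ℤ) - j).natAbs = d by omega]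
      push_cast
      rw [pow_add, inv_pow, div_mul_eq_div_div, div_self (by positivity), one_div]

def lacunaryHeatQuad (a : ℕ →₀ ℂ) (z : AddCircle (1 : ℝ)) : ℝ :=
  ∑ j ∈ a.support, ∑ k ∈ a.support,
    powGram (4 ^ j) (4 ^ k) * ⟪a j * fourier ((2 : ℤ) ^ j) z, a k * fourier ((2 : ℤ) ^ k) z⟫

theorem lacunaryHeatQuad_eq_setIntegral (a : ℕ →₀ ℂ) (z : AddCircle (1 : ℝ)) :
    lacunaryHeatQuad a z = ∫ r in Set.Ioo (0 : ℝ) 1, (1 - r) *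
      ‖deriv (fun ρ : ℝ ↦
          ∑ k ∈ a.support, a k * ((ρ ^ (4 ^ k) : ℝ) : ℂ) * fourier ((2 : ℤ) ^ k) z) r‖ ^ 2 := by
  simp only [(hasDerivAt_sum_mul_ofReal_pow_mul _ _ _ _ _).deriv]
  rw [setIntegral_one_sub_mul_norm_sum_smul_sq _ fun k _ ↦ Nat.one_le_pow _ _ (by norm_num)]
  rfl

theorem lacunaryHeatQuad_nonneg (a : ℕ →₀ ℂ) (z : AddCircle (1 : ℝ)) :
    0 ≤ lacunaryHeatQuad a z := by
  rw [lacunaryHeatQuad_eq_setIntegral]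
  exact setIntegral_nonneg measurableSet_Ioo fun r hr ↦
    mul_nonneg (sub_nonneg.2 hr.2.le) (sq_nonneg _)

theorem lacunaryHeatG_eq_sqrt (a : ℕ →₀ ℂ) (z : AddCircle (1 : ℝ)) :
    lacunaryHeatG a z = √(lacunaryHeatQuad a z) := by
  rw [lacunaryHeatG, lacunaryHeatQuad_eq_setIntegral, Real.sqrt_eq_rpow]

theorem lacunaryHeatG_nonneg (a : ℕ →₀ ℂ) (z : AddCircle (1 : ℝ)) : 0 ≤ lacunaryHeatG a z := by
  rw [lacunaryHeatG_eq_sqrt]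
  positivity

theorem continuous_lacunaryHeatG (a : ℕ →₀ ℂ) : Continuous (lacunaryHeatG a) := by
  simp only [funext (lacunaryHeatG_eq_sqrt a), lacunaryHeatQuad]
  fun_prop

theorem lacunaryHeatQuad_le (a : ℕ →₀ ℂ) (z : AddCircle (1 : ℝ)) :
    lacunaryHeatQuad a z ≤ 5 / 3 * ∑ k ∈ a.support, ‖a k‖ ^ 2 := by
  have h_norm (k : ℕ) : ‖a k * fourier ((2 : ℤ) ^ k) z‖ = ‖a k‖ := by
    rw [norm_mul, fourier_apply, Circle.norm_coe, mul_one]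
  have h_gram_nonneg (j k : ℕ) : 0 ≤ powGram (4 ^ j) (4 ^ k) :=
    powGram_nonneg (Nat.one_le_pow _ _ (by norm_num))
  calc lacunaryHeatQuad a z
      ≤ ∑ j ∈ a.support, ∑ k ∈ a.support, powGram (4 ^ j) (4 ^ k) * (‖a j‖ * ‖a k‖) :=
        Finset.sum_le_sum fun j _ ↦ Finset.sum_le_sum fun k _ ↦ by
          rw [← h_norm j, ← h_norm k]
          exact mul_le_mul_of_nonneg_left (real_inner_le_norm _ _) (h_gram_nonneg j k)
    _ ≤ 5 / 3 * ∑ k ∈ a.support, ‖a k‖ ^ 2 := by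
      refine sum_sum_mul_mul_le_of_sum_le _ _ h_gram_nonneg (fun j k ↦ powGram_comm _ _)
        fun j _ ↦ ?_
      calc ∑ k ∈ a.support, powGram (4 ^ j) (4 ^ k)
          ≤ ∑ k ∈ a.support, 4⁻¹ ^ ((k : ℤ) - j).natAbs :=
            Finset.sum_le_sum fun k _ ↦ powGram_four_pow_le j k
        _ ≤ (1 + 4⁻¹) / (1 - 4⁻¹) := sum_pow_natAbs_sub_le _ _ (by norm_num) (by norm_num)
        _ = 5 / 3 := by norm_num

theorem lacunaryHeatG_le (a : ℕ →₀ ℂ) (z : AddCircle (1 : ℝ)) :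
    lacunaryHeatG a z ≤ 2 * √(∑ k ∈ a.support, ‖a k‖ ^ 2) := by
  have h_sum : 0 ≤ ∑ k ∈ a.support, ‖a k‖ ^ 2 := by positivity
  rw [lacunaryHeatG_eq_sqrt, Real.sqrt_le_left (by positivity), mul_pow, Real.sq_sqrt h_sum]
  linarith [lacunaryHeatQuad_le a z]

theorem integral_lacunaryHeatQuad (a : ℕ →₀ ℂ) :
    ∫ z, lacunaryHeatQuad a z = ∑ k ∈ a.support, powGram (4 ^ k) (4 ^ k) * ‖a k‖ ^ 2 := by
  have h_term (j k : ℕ) : Integrable fun z : AddCircle (1 : ℝ) ↦ powGram (4 ^ j) (4 ^ k) *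
      ⟪a j * fourier ((2 : ℤ) ^ j) z, a k * fourier ((2 : ℤ) ^ k) z⟫ :=
    (by fun_prop : Continuous _).integrable_of_hasCompactSupport
      (HasCompactSupport.of_compactSpace _)
  unfold lacunaryHeatQuad
  rw [integral_finsetSum _ fun j _ ↦ integrable_finsetSum _ fun k _ ↦ h_term j k]
  refine Finset.sum_congr rfl fun j hj ↦ ?_
  simp only [integral_finsetSum _ fun k _ ↦ h_term j k, integral_const_mul,
    integral_inner_mul_fourier, pow_right_inj₀ two_pos (by norm_num : (2 : ℤ) ≠ 1)]
  simp only [mul_ite, mul_zero, Finset.sum_ite_eq, if_pos hj, real_inner_self_eq_norm_sq, one_mul]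

theorem sum_sq_div_four_le_integral_lacunaryHeatG_sq (a : ℕ →₀ ℂ) :
    (∑ k ∈ a.support, ‖a k‖ ^ 2) / 4 ≤ ∫ z, lacunaryHeatG a z ^ 2 := by
  simp only [lacunaryHeatG_eq_sqrt, Real.sq_sqrt (lacunaryHeatQuad_nonneg a _),
    integral_lacunaryHeatQuad, Finset.sum_div]
  refine Finset.sum_le_sum fun k _ ↦ ?_
  rw [div_eq_mul_one_div, mul_comm]
  exact mul_le_mul_of_nonneg_right (one_fourth_le_powGram_self (Nat.one_le_pow _ _ (by norm_num)))
    (sq_nonneg _)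

theorem eLpNorm_lacunaryHeatG_le (a : ℕ →₀ ℂ) (p : ℝ≥0∞) :
    eLpNorm (lacunaryHeatG a) p volume ≤
      ENNReal.ofReal (2 * √(∑ k ∈ a.support, ‖a k‖ ^ 2)) :=
  eLpNorm_le_ofReal_of_forall_norm_le p fun z ↦
    (Real.norm_of_nonneg (lacunaryHeatG_nonneg a z)).trans_le (lacunaryHeatG_le a z)

theorem ofReal_sqrt_div_eight_le_eLpNorm_lacunaryHeatG (a : ℕ →₀ ℂ) {p : ℝ≥0∞} (hp : 1 ≤ p) :
    ENNReal.ofReal (√(∑ k ∈ a.support, ‖a k‖ ^ 2) / 8) ≤ eLpNorm (lacunaryHeatG a) p volume := by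
  refine le_trans (ENNReal.ofReal_le_ofReal ?_) (ofReal_integral_sq_div_le_eLpNorm hp
    (continuous_lacunaryHeatG a).aestronglyMeasurable (lacunaryHeatG_nonneg a) (lacunaryHeatG_le a))
  have h_L2 := sum_sq_div_four_le_integral_lacunaryHeatG_sq a
  rw [← Real.sq_sqrt (by positivity : 0 ≤ ∑ k ∈ a.support, ‖a k‖ ^ 2)] at h_L2
  rcases (Real.sqrt_nonneg (∑ k ∈ a.support, ‖a k‖ ^ 2)).eq_or_lt with hS | hS
  · rw [← hS]
    simp
  · rw [div_le_div_iff₀ (by norm_num) (by positivity)]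
    nlinarith

/-- For lacunary series, the `L_p`-norm of the heat `g`-function is equivalent to the
`ℓ_2`-norm of the coefficients: `‖G^H(∑_k a_k e^{i2^kθ})‖_{L_p(T)} ≈ ‖a‖_{ℓ_2}` for all
`1 ≤ p < ∞`, with absolute constants independent of `p` and `a`. -/
theorem lacunaryHeatG_eLpNorm_equiv :
    ∃ C : ℝ, 0 < C ∧ ∀ p : ℝ, 1 ≤ p → ∀ a : ℕ →₀ ℂ,
      eLpNorm (lacunaryHeatG a) (ENNReal.ofReal p) volume ≤
        ENNReal.ofReal (C * Real.sqrt (∑ k ∈ a.support, ‖a k‖ ^ 2)) ∧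
      ENNReal.ofReal (Real.sqrt (∑ k ∈ a.support, ‖a k‖ ^ 2)) ≤
        ENNReal.ofReal C * eLpNorm (lacunaryHeatG a) (ENNReal.ofReal p) volume := by
  refine ⟨8, by norm_num, fun p hp a ↦ ⟨?_, ?_⟩⟩
  · refine (eLpNorm_lacunaryHeatG_le a _).trans (ENNReal.ofReal_le_ofReal ?_)
    linarith [Real.sqrt_nonneg (∑ k ∈ a.support, ‖a k‖ ^ 2)]
  · have hp' : 1 ≤ ENNReal.ofReal p := by simpa using ENNReal.ofReal_le_ofReal hp
    calc ENNReal.ofReal √(∑ k ∈ a.support, ‖a k‖ ^ 2)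
        = ENNReal.ofReal 8 * ENNReal.ofReal (√(∑ k ∈ a.support, ‖a k‖ ^ 2) / 8) := by
          rw [← ENNReal.ofReal_mul (by norm_num)]
          ring_nf
      _ ≤ _ := by
          gcongr
          exact ofReal_sqrt_div_eight_le_eLpNorm_lacunaryHeatG a hp'
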